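/- Let H be a real Hilbert space, T > 0, ρ ∈ (0,∞], and let C : [0,T] ⇉ H satisfy (H₁), (H₂), and (H₃). Let x : [0,T] → H be an admissible trajectory for C, and assume its differential measure dx is absolutely continuous with respect to a complete positive Radon measure ν on [0,T], with density v ∈ L¹_ν([0,T];H). Then the following are equivalent: (i) for every continuous y : [0,T] → H with y(t) ∈ C(t) for ν-a.e. t, ∫₀ᵀ [⟨v(t), y(t) − x(t)⟩ + (‖v(t)‖/(2ρ))‖y(t) − x(t)‖²] dν(t) ≥ 0 (x is an integral solution with respect to ν); (ii) −v(t) ∈ N^P(C(t); x(t)) for ν-a.e. t ∈ [0,T] (x is a solution in the sense of differential measures with respect to ν); (iii) E_ν(x) = 0, where E_ν(x) := inf_{y∈A_ν} ∫₀ᵀ [⟨v(t), y(t) − x(t)⟩ + (‖v(t)‖/(2ρ))‖y(t) − x(t)‖²] dν(t) and A_ν is the set of continuous y : [0,T] → H with y(t) ∈ C(t) for ν-a.e. t. -/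

import Mathlib

/-!
(ii) ⇒ (i) is pointwise: uniform prox-regularity of `C t`, tested with the proximal normal
`-v t`, makes the integrand nonnegative wherever `y t ∈ C t`.

Everything else rests on one approximation. By Lusin's theorem `x` is continuous on a compact
set carrying all but an arbitrarily small part of `ν`, so (H₃) extends `x`, together with any
continuous selection prescribed on a disjoint compact set, to a continuous selection of `C` on
`[0,T]`. The integrand vanishes where the extension equals `x`, and by absolute continuity of
`∫ ‖v‖ dν` the rest contributes at most `ε`; hence `E_ν(x) ≤ 0`. If (ii) fails on a set of
positive measure, take a density point `t₀` of it at which `(v, x)` is continuous along a Lusin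
compact, and a violating `z₀ ∈ C t₀`: a selection through `z₀` keeps the integrand below a
negative constant on a compact set of positive measure near `t₀`, and prescribing it there makes
the integral negative, contradicting (i).
-/

open MeasureTheory Set Metric Filter Topology
open scoped RealInnerProductSpace ENNReal

/-- The proximal normal cone of `S` at `x`: `ζ ∈ N^P(S;x)` iff there are `σ ≥ 0`, `η > 0`
with `⟪ζ, y - x⟫ ≤ σ‖y - x‖²` for all `y ∈ S` with `‖y - x‖ < η`. -/
def ProxNormalCone {H : Type*} [NormedAddCommGroup H] [InnerProductSpace ℝ H]
    (S : Set H) (x : H) : Set H :=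
  {ζ : H | ∃ σ : ℝ, 0 ≤ σ ∧ ∃ η : ℝ, 0 < η ∧
    ∀ y ∈ S, ‖y - x‖ < η → ⟪ζ, y - x⟫ ≤ σ * ‖y - x‖ ^ 2}

/-- `ρ`-uniform prox-regularity, with `ρ ∈ (0,∞]` encoded in `ℝ≥0∞`.
For `ρ = ∞` one has `‖ζ‖ / (2 * ρ.toReal) = ‖ζ‖ / 0 = 0`, recovering the convex inequality. -/
def UniformlyProxRegular {H : Type*} [NormedAddCommGroup H] [InnerProductSpace ℝ H]
    (ρ : ℝ≥0∞) (S : Set H) : Prop :=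
  ∀ x ∈ S, ∀ ζ ∈ ProxNormalCone S x, ∀ x' ∈ S,
    ⟪ζ, x' - x⟫ ≤ ‖ζ‖ / (2 * ρ.toReal) * ‖x' - x‖ ^ 2

/-- Lower semicontinuity of a set-valued map on a set `A`: for every `a ∈ A` and open `U`
meeting `C a`, the set of points of `A` where `C` meets `U` is a neighborhood of `a` in `A`. -/
def LscOn {α β : Type*} [TopologicalSpace α] [TopologicalSpace β]
    (C : α → Set β) (A : Set α) : Prop :=
  ∀ a ∈ A, ∀ U : Set β, IsOpen U → (C a ∩ U).Nonempty →
    {a' | a' ∈ A ∧ (C a' ∩ U).Nonempty} ∈ nhdsWithin a A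

/-- Admissible trajectory for a moving set `C` on `[0,T]`: right-continuous, of bounded
variation, with `x 0 ∈ C 0` and `x t ∈ C t` for all `t ∈ [0,T]`. -/
def AdmissibleTrajectory {E : Type*} [NormedAddCommGroup E]
    (C : ℝ → Set E) (T : ℝ) (x : ℝ → E) : Prop :=
  (∀ t ∈ Icc (0:ℝ) T, ContinuousWithinAt x (Ici t) t) ∧
    BoundedVariationOn x (Icc (0:ℝ) T) ∧ x 0 ∈ C 0 ∧ ∀ t ∈ Icc (0:ℝ) T, x t ∈ C t

/-- The differential measure `dx` is absolutely continuous w.r.t. `ν` with density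
`v ∈ L¹_ν`: `x t = x 0 + ∫_{(0,t]} v dν` for all `t ∈ [0,T]`. -/
def HasDensity {E : Type*} [NormedAddCommGroup E] [NormedSpace ℝ E]
    (T : ℝ) (ν : Measure ℝ) (x v : ℝ → E) : Prop :=
  Integrable v ν ∧ ∀ t ∈ Icc (0:ℝ) T, x t = x 0 + ∫ s in Ioc (0:ℝ) t, v s ∂ν

/-- A (complete) positive Radon measure on `[0,T]`: a finite inner regular Borel measure
carried by `[0,T]`. -/
def IsRadonOn (ν : Measure ℝ) (T : ℝ) : Prop :=
  IsFiniteMeasure ν ∧ ν.InnerRegular ∧ ν ((Icc (0:ℝ) T)ᶜ) = 0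

/-- The bounded selection-extension property (H₃). -/
def SelectionExtension {E : Type*} [NormedAddCommGroup E] (C : ℝ → Set E) (T : ℝ) : Prop :=
  ∀ x : ℝ → E, (∃ M : ℝ, ∀ t ∈ Icc (0:ℝ) T, ‖x t‖ ≤ M) →
    (∀ t ∈ Icc (0:ℝ) T, x t ∈ C t) → ∀ η : ℝ, 0 < η →
    ∃ R : ℝ, 0 < R ∧
      ∀ K : Set ℝ, IsCompact K → K ⊆ Icc (0:ℝ) T →
        ∀ y : ℝ → E, ContinuousOn y K → (∀ t ∈ K, y t ∈ C t) →
          (∀ t ∈ K, ‖y t - x t‖ ≤ η) →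
          ∃ ybar : ℝ → E, ContinuousOn ybar (Icc (0:ℝ) T) ∧
            (∀ t ∈ Icc (0:ℝ) T, ybar t ∈ C t) ∧ (∀ t ∈ K, ybar t = y t) ∧
            ∀ t ∈ Icc (0:ℝ) T, ‖ybar t‖ ≤ R

/-- Hypothesis (H₁): each `C t` is nonempty, closed, connected and `ρ`-uniformly prox-regular. -/
def HypH1 {H : Type*} [NormedAddCommGroup H] [InnerProductSpace ℝ H]
    (ρ : ℝ≥0∞) (C : ℝ → Set H) (T : ℝ) : Prop :=
  ∀ t ∈ Icc (0:ℝ) T, (C t).Nonempty ∧ IsClosed (C t) ∧ IsConnected (C t) ∧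
    UniformlyProxRegular ρ (C t)

namespace MeasureTheory

variable {α β : Type*} [TopologicalSpace α] [T2Space α] [MeasurableSpace α]
  [OpensMeasurableSpace α] {μ : Measure α} [IsFiniteMeasure μ] [μ.InnerRegularCompactLTTop]
  {A : Set α}

theorem SimpleFunc.exists_isCompact_continuousOn [TopologicalSpace β] (g : SimpleFunc α β)
    (hA : MeasurableSet A) {ε : ℝ≥0∞} (hε : ε ≠ 0) :
    ∃ K ⊆ A, IsCompact K ∧ μ (A \ K) ≤ ε ∧ ContinuousOn g K := by
  classical
  have hδ : ε / g.range.card ≠ 0 := ENNReal.div_ne_zero.2 ⟨hε, ENNReal.natCast_ne_top _⟩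
  choose L hLA hL hLμ using fun c : g.range =>
    (hA.inter (g.measurableSet_fiber c)).exists_isCompact_sdiff_lt (measure_ne_top μ _) hδ
  refine ⟨⋃ c, L c, iUnion_subset fun c => (hLA c).trans inter_subset_left,
    isCompact_iUnion hL, ?_, ?_⟩
  · have hcover : A \ ⋃ c, L c ⊆ ⋃ c : g.range, (A ∩ g ⁻¹' {(c : β)}) \ L c := fun t ht =>
      mem_iUnion.2 ⟨⟨g t, g.mem_range_self t⟩, ⟨ht.1, rfl⟩, fun h => ht.2 (mem_iUnion.2 ⟨_, h⟩)⟩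
    calc μ (A \ ⋃ c, L c) ≤ ∑ c : g.range, μ ((A ∩ g ⁻¹' {(c : β)}) \ L c) :=
          (measure_mono hcover).trans (measure_iUnion_fintype_le _ _)
      _ ≤ ∑ _c : g.range, ε / g.range.card := Finset.sum_le_sum fun c _ => (hLμ c).le
      _ ≤ ε := by
          rw [Finset.sum_const, Finset.card_univ, Fintype.card_coe, nsmul_eq_mul]
          exact ENNReal.mul_div_le
  · exact (locallyFinite_of_finite L).continuousOn_iUnion (fun c => (hL c).isClosed)
      fun c => continuousOn_const.congr fun t ht => (hLA c ht).2

theorem StronglyMeasurable.exists_isCompact_continuousOn [PseudoMetricSpace β] {f : α → β}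
    (hf : StronglyMeasurable f) (hA : MeasurableSet A) {ε : ℝ≥0∞} (hε : ε ≠ 0) :
    ∃ K ⊆ A, IsCompact K ∧ μ (A \ K) < ε ∧ ContinuousOn f K := by
  obtain ⟨δ, hδ0, hδε⟩ := ENNReal.exists_pos_sum_of_countable' hε ℕ
  have hδtop : δ 0 ≠ ∞ := ((ENNReal.le_tsum 0).trans_lt hδε).ne_top
  obtain ⟨t, htA, htm, htμ, hunif⟩ := tendstoUniformlyOn_of_ae_tendsto
    (fun n => (hf.approx n).stronglyMeasurable) hf hA (measure_ne_top μ A)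
    (ae_of_all _ fun a _ => hf.tendsto_approx a) (ENNReal.toReal_pos (hδ0 0).ne' hδtop)
  rw [ENNReal.ofReal_toReal hδtop] at htμ
  choose K hKA hK hKμ hKf using fun n =>
    (hf.approx n).exists_isCompact_continuousOn (μ := μ) (hA.diff htm) (hδ0 (n + 1)).ne'
  refine ⟨⋂ n, K n, (iInter_subset K 0).trans ((hKA 0).trans sdiff_subset),
    (hK 0).of_isClosed_subset (isClosed_iInter fun n => (hK n).isClosed) (iInter_subset K 0),
    ?_, ?_⟩
  · have hcover : A \ ⋂ n, K n ⊆ t ∪ ⋃ n, (A \ t) \ K n := fun a ha => by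
      by_cases hat : a ∈ t
      · exact Or.inl hat
      · obtain ⟨n, hn⟩ := not_forall.1 fun h => ha.2 (mem_iInter.2 h)
        exact Or.inr (mem_iUnion.2 ⟨n, ⟨ha.1, hat⟩, hn⟩)
    calc μ (A \ ⋂ n, K n) ≤ μ t + ∑' n, μ ((A \ t) \ K n) :=
          (measure_mono hcover).trans ((measure_union_le _ _).trans
            (add_le_add_right (measure_iUnion_le _) _))
      _ ≤ δ 0 + ∑' n, δ (n + 1) := add_le_add htμ (ENNReal.tsum_le_tsum hKμ)
      _ = ∑' n, δ n := (tsum_eq_zero_add' ENNReal.summable).symm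
      _ < ε := hδε
  · exact (hunif.mono ((iInter_subset K 0).trans (hKA 0))).continuousOn
      (Eventually.of_forall fun n => (hKf n).mono (iInter_subset K n)).frequently

theorem AEStronglyMeasurable.exists_isCompact_continuousOn [PseudoMetricSpace β] {f : α → β}
    (hA : MeasurableSet A) (hf : AEStronglyMeasurable f (μ.restrict A)) {ε : ℝ≥0∞}
    (hε : ε ≠ 0) : ∃ K ⊆ A, IsCompact K ∧ μ (A \ K) < ε ∧ ContinuousOn f K := by
  have hbad : μ {a | ¬(a ∈ A → f a = hf.mk f a)} = 0 :=
    ae_iff.1 ((ae_restrict_iff' hA).1 hf.ae_eq_mk)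
  set Z := toMeasurable μ {a | ¬(a ∈ A → f a = hf.mk f a)}
  obtain ⟨K, hKA, hK, hKμ, hKf⟩ := hf.stronglyMeasurable_mk.exists_isCompact_continuousOn (μ := μ)
    (hA.diff (measurableSet_toMeasurable μ _)) hε
  refine ⟨K, hKA.trans sdiff_subset, hK, ?_, hKf.congr fun a ha => ?_⟩
  · rwa [sdiff_sdiff_comm, measure_sdiff_null (by rwa [measure_toMeasurable])] at hKμ
  · by_contra hne
    exact (hKA ha).2 (subset_toMeasurable _ _
      (show a ∈ {a | ¬(a ∈ A → f a = hf.mk f a)} from fun h => hne (h (hKA ha).1)))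

end MeasureTheory

theorem MeasureTheory.Integrable.exists_pos_forall_setIntegral_le {α : Type*}
    [MeasurableSpace α] {μ : Measure α} {g : α → ℝ} (hg : Integrable g μ) {ε : ℝ} (hε : 0 < ε) :
    ∃ δ > 0, ∀ s, μ s < δ → ∫ t in s, g t ∂μ ≤ ε := by
  obtain ⟨δ, hδ, hδs⟩ := exists_pos_setLIntegral_lt_of_measure_lt hg.hasFiniteIntegral.ne
    (ENNReal.ofReal_pos.2 hε).ne'
  refine ⟨δ, hδ, fun s hs => ?_⟩
  calc ∫ t in s, g t ∂μ ≤ ∫ t in s, ‖g t‖ ∂μ :=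
        (le_abs_self _).trans abs_integral_le_integral_abs
    _ = (∫⁻ t in s, ‖g t‖ₑ ∂μ).toReal :=
        integral_norm_eq_lintegral_enorm hg.aestronglyMeasurable.restrict
    _ ≤ ε := ENNReal.toReal_le_of_le_ofReal hε.le (hδs s hs).le

theorem BoundedVariationOn.exists_norm_le {α E : Type*} [LinearOrder α] [NormedAddCommGroup E]
    {f : α → E} {s : Set α} (hf : BoundedVariationOn f s) : ∃ M, ∀ t ∈ s, ‖f t‖ ≤ M := by
  rcases s.eq_empty_or_nonempty with rfl | ⟨a, ha⟩
  · exact ⟨0, by simp⟩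
  refine ⟨‖f a‖ + (eVariationOn f s).toReal, fun t ht => ?_⟩
  have hdist : dist (f t) (f a) ≤ (eVariationOn f s).toReal := by
    rw [dist_edist]
    exact ENNReal.toReal_mono hf (eVariationOn.edist_le f ht ha)
  linarith [norm_le_norm_add_norm_sub' (f t) (f a), dist_eq_norm (f t) (f a)]

theorem stronglyMeasurable_setIntegral_Ioc {E : Type*} [NormedAddCommGroup E] [NormedSpace ℝ E]
    {ν : Measure ℝ} [SFinite ν] {v : ℝ → E} (hv : AEStronglyMeasurable v ν) (a : ℝ) :
    StronglyMeasurable fun t => ∫ s in Ioc a t, v s ∂ν := by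
  have hset : MeasurableSet {p : ℝ × ℝ | a < p.2 ∧ p.2 ≤ p.1} :=
    (measurableSet_lt measurable_const measurable_snd).inter
      (measurableSet_le measurable_snd measurable_fst)
  have hg : StronglyMeasurable (Set.indicator {p : ℝ × ℝ | a < p.2 ∧ p.2 ≤ p.1}
      fun p => hv.mk v p.2) :=
    (hv.stronglyMeasurable_mk.comp_measurable measurable_snd).indicator hset
  convert hg.integral_prod_right' (ν := ν) using 1
  ext t
  rw [← integral_indicator measurableSet_Ioc]
  exact integral_congr_ae (hv.ae_eq_mk.mono fun s hs => by
    simp only [indicator, mem_Ioc, mem_ofPred_eq, hs])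

theorem HasDensity.aestronglyMeasurable {E : Type*} [NormedAddCommGroup E] [NormedSpace ℝ E]
    {T : ℝ} {ν : Measure ℝ} [SFinite ν] {x v : ℝ → E} (h : HasDensity T ν x v) :
    AEStronglyMeasurable x (ν.restrict (Icc 0 T)) :=
  ((stronglyMeasurable_const.add (stronglyMeasurable_setIntegral_Ioc
    h.1.aestronglyMeasurable 0)).aestronglyMeasurable).congr
    ((ae_restrict_iff' measurableSet_Icc).2 (ae_of_all _ fun t ht => (h.2 t ht).symm))

theorem EReal.sInf_eq_zero_of_forall {S : Set EReal} (h0 : ∀ r ∈ S, 0 ≤ r)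
    (hS : ∀ ε : ℝ, 0 < ε → ∃ r ∈ S, r ≤ ε) : sInf S = 0 := by
  refine le_antisymm (not_lt.1 fun hpos => ?_) (le_sInf h0)
  obtain ⟨ε, hε, hεS⟩ := EReal.lt_iff_exists_real_btwn.1 hpos
  obtain ⟨r, hr, hrε⟩ := hS ε (EReal.coe_pos.1 hε)
  exact (sInf_le hr).trans hrε |>.not_gt hεS

theorem SelectionExtension.exists_bound_extend_union {E : Type*} [NormedAddCommGroup E]
    {C : ℝ → Set E} {T : ℝ} {x : ℝ → E} (hC : SelectionExtension C T)
    (hxb : ∃ M, ∀ t ∈ Icc 0 T, ‖x t‖ ≤ M) (hxC : ∀ t ∈ Icc 0 T, x t ∈ C t) {η : ℝ}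
    (hη : 0 < η) :
    ∃ R, ∀ L K : Set ℝ, IsCompact L → IsCompact K → Disjoint L K → L ⊆ Icc 0 T →
      K ⊆ Icc 0 T → ∀ w : ℝ → E, ContinuousOn w L → (∀ t ∈ L, w t ∈ C t) →
      (∀ t ∈ L, ‖w t - x t‖ ≤ η) → ContinuousOn x K →
      ∃ y, ContinuousOn y (Icc 0 T) ∧ (∀ t ∈ Icc 0 T, y t ∈ C t) ∧ EqOn y w L ∧
        EqOn y x K ∧ ∀ t ∈ Icc 0 T, ‖y t‖ ≤ R := by
  classical
  obtain ⟨R, -, hR⟩ := hC x hxb hxC η hη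
  refine ⟨R, fun L K hL hK hLK hLI hKI w hw hwC hwx hxK => ?_⟩
  have hwL : EqOn (L.piecewise w x) w L := fun t ht => piecewise_eq_of_mem _ _ _ ht
  have hxK' : EqOn (L.piecewise w x) x K := fun t ht =>
    piecewise_eq_of_notMem _ _ _ (disjoint_right.1 hLK ht)
  obtain ⟨y, hy, hyC, hyLK, hyR⟩ := hR (L ∪ K) (hL.union hK) (union_subset hLI hKI)
    (L.piecewise w x) ((hw.congr hwL).union_of_isClosed (hxK.congr hxK') hL.isClosed hK.isClosed)
    (by rintro t (ht | ht)
        · exact (hwL ht).symm ▸ hwC t ht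
        · exact (hxK' ht).symm ▸ hxC t (hKI ht))
    (by rintro t (ht | ht)
        · exact (hwL ht).symm ▸ hwx t ht
        · simp [hxK' ht, hη.le])
  exact ⟨y, hy, hyC, fun t ht => (hyLK t (Or.inl ht)).trans (hwL ht),
    fun t ht => (hyLK t (Or.inr ht)).trans (hxK' ht), hyR⟩

section Integrand

variable {H : Type*} [NormedAddCommGroup H] [InnerProductSpace ℝ H] {ρ : ℝ≥0∞}

/-- The integrand of `E_ν`, evaluated at velocity `v` and displacement `d = y - x`. -/
noncomputable def benIntegrand (ρ : ℝ≥0∞) (v d : H) : ℝ :=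
  ⟪v, d⟫ + ‖v‖ / (2 * ρ.toReal) * ‖d‖ ^ 2

theorem abs_benIntegrand_le {v d : H} {c : ℝ} (hd : ‖d‖ ≤ c) :
    |benIntegrand ρ v d| ≤ ‖v‖ * (c + c ^ 2 / (2 * ρ.toReal)) := by
  have hk : 0 ≤ ‖v‖ / (2 * ρ.toReal) :=
    div_nonneg (norm_nonneg v) (mul_nonneg zero_le_two ENNReal.toReal_nonneg)
  have hinner : |⟪v, d⟫| ≤ ‖v‖ * c :=
    (abs_real_inner_le_norm v d).trans (mul_le_mul_of_nonneg_left hd (norm_nonneg v))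
  have hsq : ‖v‖ / (2 * ρ.toReal) * ‖d‖ ^ 2 ≤ ‖v‖ / (2 * ρ.toReal) * c ^ 2 := by
    gcongr
  calc |benIntegrand ρ v d| ≤ |⟪v, d⟫| + ‖v‖ / (2 * ρ.toReal) * ‖d‖ ^ 2 :=
        (abs_add_le _ _).trans_eq (by rw [abs_of_nonneg (mul_nonneg hk (sq_nonneg _))])
    _ ≤ ‖v‖ * c + ‖v‖ / (2 * ρ.toReal) * c ^ 2 := by linarith
    _ = ‖v‖ * (c + c ^ 2 / (2 * ρ.toReal)) := by ring

theorem UniformlyProxRegular.benIntegrand_nonneg {S : Set H} (hS : UniformlyProxRegular ρ S)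
    {x y v : H} (hx : x ∈ S) (hy : y ∈ S) (hv : -v ∈ ProxNormalCone S x) :
    0 ≤ benIntegrand ρ v (y - x) := by
  have := hS x hx (-v) hv y hy
  rw [inner_neg_left, norm_neg] at this
  unfold benIntegrand
  linarith

theorem exists_benIntegrand_neg_of_neg_notMem_proxNormalCone {S : Set H} {x v : H}
    (hv : -v ∉ ProxNormalCone S x) : ∃ z ∈ S, ‖z - x‖ < 1 ∧ benIntegrand ρ v (z - x) < 0 := by
  simp only [ProxNormalCone, mem_ofPred_eq, not_exists, not_and, not_forall, not_le] at hv
  obtain ⟨z, hz, hz1, hlt⟩ := hv (‖v‖ / (2 * ρ.toReal))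
    (div_nonneg (norm_nonneg v) (mul_nonneg zero_le_two ENNReal.toReal_nonneg)) 1 one_pos
  refine ⟨z, hz, hz1, ?_⟩
  rw [inner_neg_left] at hlt
  unfold benIntegrand
  linarith

variable {ν : Measure ℝ} {s : Set ℝ} {x v y : ℝ → H}

theorem integrableOn_benIntegrand (hv : Integrable v ν)
    (hx : AEStronglyMeasurable x (ν.restrict s)) (hy : AEStronglyMeasurable y (ν.restrict s))
    (hs : MeasurableSet s) {c : ℝ} (hc : ∀ t ∈ s, ‖y t - x t‖ ≤ c) :
    IntegrableOn (fun t => benIntegrand ρ (v t) (y t - x t)) s ν := by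
  have hd := hy.sub hx
  refine Integrable.mono' (hv.norm.mul_const (c + c ^ 2 / (2 * ρ.toReal))).integrableOn
    ((hv.aestronglyMeasurable.restrict.inner hd).add
      ((hv.aestronglyMeasurable.restrict.norm.aemeasurable.div_const _).aestronglyMeasurable.mul
        (hd.norm.pow 2))) ?_
  exact (ae_restrict_iff' hs).2 (ae_of_all _ fun t ht => abs_benIntegrand_le (hc t ht))

end Integrand

section MovingSet

variable {H : Type*} [NormedAddCommGroup H] [InnerProductSpace ℝ H] {ρ : ℝ≥0∞}
  {C : ℝ → Set H} {T : ℝ} {ν : Measure ℝ} {x v : ℝ → H}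

def proxViolationSet (ρ : ℝ≥0∞) (C : ℝ → Set H) (T : ℝ) (x v : ℝ → H) (ε : ℝ) : Set ℝ :=
  {t | t ∈ Icc 0 T ∧ ∃ z ∈ C t, ‖z - x t‖ < 1 ∧ benIntegrand ρ (v t) (z - x t) < -ε}

theorem setIntegral_benIntegrand_nonneg {y : ℝ → H}
    (hC : ∀ t ∈ Icc 0 T, UniformlyProxRegular ρ (C t))
    (hνI : ν (Icc 0 T)ᶜ = 0) (hxC : ∀ t ∈ Icc 0 T, x t ∈ C t)
    (hv : ∀ᵐ t ∂ν, -v t ∈ ProxNormalCone (C t) (x t)) (hyC : ∀ᵐ t ∂ν, y t ∈ C t) :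
    0 ≤ ∫ t in Icc 0 T, benIntegrand ρ (v t) (y t - x t) ∂ν := by
  refine integral_nonneg_of_ae (ae_restrict_of_ae ?_)
  filter_upwards [hv, hyC, ae_iff.2 hνI] with t hvt hyt ht
  exact (hC t ht).benIntegrand_nonneg (hxC t ht) hyt hvt

theorem exists_measure_ne_zero_of_not_ae_neg_mem_proxNormalCone (hνI : ν (Icc 0 T)ᶜ = 0)
    (h : ¬∀ᵐ t ∂ν, -v t ∈ ProxNormalCone (C t) (x t)) :
    ∃ ε > 0, ν (proxViolationSet ρ C T x v ε) ≠ 0 := by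
  by_contra! hnull
  refine h (ae_iff.2 (measure_mono_null (fun t ht => ?_) (measure_union_null hνI
    (measure_iUnion_null fun n : ℕ => hnull (1 / (n + 1)) Nat.one_div_pos_of_nat))))
  by_cases htI : t ∈ Icc 0 T
  · obtain ⟨z, hz, hz1, hneg⟩ := exists_benIntegrand_neg_of_neg_notMem_proxNormalCone (ρ := ρ) ht
    obtain ⟨n, hn⟩ := exists_nat_one_div_lt (neg_pos.2 hneg)
    exact Or.inr (mem_iUnion.2 ⟨n, htI, z, hz, hz1, by linarith⟩)
  · exact Or.inl htI

variable [IsFiniteMeasure ν] [ν.InnerRegularCompactLTTop]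

theorem SelectionExtension.exists_setIntegral_benIntegrand_le (hC : SelectionExtension C T)
    (hxb : ∃ M, ∀ t ∈ Icc 0 T, ‖x t‖ ≤ M) (hxC : ∀ t ∈ Icc 0 T, x t ∈ C t)
    (hx : AEStronglyMeasurable x (ν.restrict (Icc 0 T))) (hv : Integrable v ν)
    {L : Set ℝ} (hL : IsCompact L) (hLI : L ⊆ Icc 0 T) {w : ℝ → H} (hw : ContinuousOn w L)
    (hwC : ∀ t ∈ L, w t ∈ C t) (hwx : ∃ η, ∀ t ∈ L, ‖w t - x t‖ ≤ η) {ε : ℝ} (hε : 0 < ε) :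
    ∃ y, ContinuousOn y (Icc 0 T) ∧ (∀ t ∈ Icc 0 T, y t ∈ C t) ∧
      ∫ t in Icc 0 T, benIntegrand ρ (v t) (y t - x t) ∂ν ≤
        ∫ t in L, benIntegrand ρ (v t) (w t - x t) ∂ν + ε := by
  obtain ⟨η, hη⟩ := hwx
  obtain ⟨R, hR⟩ :=
    hC.exists_bound_extend_union hxb hxC (lt_max_of_lt_right one_pos : (0 : ℝ) < max η 1)
  obtain ⟨M, hM⟩ := hxb
  set b := (R + M) + (R + M) ^ 2 / (2 * ρ.toReal)
  obtain ⟨δ, hδ, hδε⟩ := (hv.norm.mul_const b).exists_pos_forall_setIntegral_le hε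
  obtain ⟨K, hKIL, hK, hKδ, hxK⟩ :=
    (hx.mono_measure (Measure.restrict_mono sdiff_subset le_rfl)).exists_isCompact_continuousOn
      (measurableSet_Icc.diff hL.measurableSet) hδ.ne'
  obtain ⟨y, hy, hyC, hyL, hyK, hyR⟩ := hR L K hL hK
    (disjoint_left.2 fun t htL htK => (hKIL htK).2 htL) hLI (hKIL.trans sdiff_subset) w hw hwC
    (fun t ht => (hη t ht).trans (le_max_left η 1)) hxK
  refine ⟨y, hy, hyC, ?_⟩
  have hyx : ∀ t ∈ Icc 0 T, ‖y t - x t‖ ≤ R + M := fun t ht =>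
    (norm_sub_le _ _).trans (add_le_add (hyR t ht) (hM t ht))
  have hint := integrableOn_benIntegrand (ρ := ρ) hv hx
    (hy.aestronglyMeasurable measurableSet_Icc) measurableSet_Icc hyx
  calc ∫ t in Icc 0 T, benIntegrand ρ (v t) (y t - x t) ∂ν
      = ∫ t in L, benIntegrand ρ (v t) (y t - x t) ∂ν +
          ∫ t in Icc 0 T \ L, benIntegrand ρ (v t) (y t - x t) ∂ν := by
        rw [← integral_inter_add_sdiff hL.measurableSet hint, inter_eq_right.2 hLI]
    _ = ∫ t in L, benIntegrand ρ (v t) (w t - x t) ∂ν +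
          ∫ t in (Icc 0 T \ L) \ K, benIntegrand ρ (v t) (y t - x t) ∂ν := by
        rw [setIntegral_congr_fun hL.measurableSet fun t ht => by rw [hyL ht],
          setIntegral_eq_of_subset_of_forall_sdiff_eq_zero
            (measurableSet_Icc.diff hL.measurableSet) sdiff_subset fun t ht => ?_]
        have htK : t ∈ K := by_contra fun h => ht.2 ⟨ht.1, h⟩
        simp [benIntegrand, hyK htK]
    _ ≤ ∫ t in L, benIntegrand ρ (v t) (w t - x t) ∂ν + ε := by
        refine add_le_add_right ((setIntegral_mono_on
          (hint.mono_set (sdiff_subset.trans sdiff_subset)) (hv.norm.mul_const b).integrableOn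
          ((measurableSet_Icc.diff hL.measurableSet).diff hK.measurableSet)
          fun t ht => (le_abs_self _).trans (abs_benIntegrand_le (hyx t ht.1.1))).trans
          (hδε _ hKδ)) _

theorem SelectionExtension.exists_setIntegral_benIntegrand_le_of_pos (hC : SelectionExtension C T)
    (hxb : ∃ M, ∀ t ∈ Icc 0 T, ‖x t‖ ≤ M) (hxC : ∀ t ∈ Icc 0 T, x t ∈ C t)
    (hx : AEStronglyMeasurable x (ν.restrict (Icc 0 T))) (hv : Integrable v ν)
    {ε : ℝ} (hε : 0 < ε) :
    ∃ y, ContinuousOn y (Icc 0 T) ∧ (∀ t ∈ Icc 0 T, y t ∈ C t) ∧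
      ∫ t in Icc 0 T, benIntegrand ρ (v t) (y t - x t) ∂ν ≤ ε := by
  simpa using hC.exists_setIntegral_benIntegrand_le (ρ := ρ) hxb hxC hx hv isCompact_empty
    (empty_subset _) (continuousOn_empty x) (fun _ => False.elim) ⟨0, fun _ => False.elim⟩ hε

theorem SelectionExtension.exists_isCompact_benIntegrand_lt (hC : SelectionExtension C T)
    (hxb : ∃ M, ∀ t ∈ Icc 0 T, ‖x t‖ ≤ M) (hxC : ∀ t ∈ Icc 0 T, x t ∈ C t)
    (hx : AEStronglyMeasurable x (ν.restrict (Icc 0 T)))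
    (hv : AEStronglyMeasurable v (ν.restrict (Icc 0 T))) {ε : ℝ} (hε : 0 < ε)
    (hN : ν (proxViolationSet ρ C T x v ε) ≠ 0) :
    ∃ K ⊆ Icc 0 T, IsCompact K ∧ ν K ≠ 0 ∧ ∃ w, ContinuousOn w K ∧ (∀ t ∈ K, w t ∈ C t) ∧
      (∃ η, ∀ t ∈ K, ‖w t - x t‖ ≤ η) ∧ ∀ t ∈ K, benIntegrand ρ (v t) (w t - x t) < -(ε / 2) := by
  set N := proxViolationSet ρ C T x v ε
  obtain ⟨K₀, hK₀I, hK₀, hK₀N, hvx⟩ :=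
    (hv.prodMk hx).exists_isCompact_continuousOn measurableSet_Icc hN
  have hNK₀ : ν (N ∩ K₀) ≠ 0 := fun h0 => by
    have := (measure_le_inter_add_sdiff ν N K₀).trans
      (add_le_add_right (measure_mono (sdiff_subset_sdiff_left fun t ht => ht.1)) _)
    rw [h0, zero_add] at this
    exact this.not_gt hK₀N
  obtain ⟨t₀, ⟨⟨ht₀I, z₀, hz₀, hz₀1, hz₀ε⟩, ht₀K₀⟩, ht₀⟩ :=
    exists_mem_forall_mem_nhdsWithin_pos_measure hNK₀
  obtain ⟨M, hM⟩ := hxb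
  obtain ⟨R, -, hR⟩ := hC x ⟨M, hM⟩ hxC 1 one_pos
  obtain ⟨w, hw, hwC, hwt₀, hwR⟩ := hR {t₀} isCompact_singleton (singleton_subset_iff.2 ht₀I)
    (fun _ => z₀) continuousOn_const (by simpa using hz₀) (by simpa using hz₀1.le)
  have hφ : ContinuousOn (fun t => benIntegrand ρ (v t) (w t - x t)) K₀ := by
    have hvK := continuous_fst.comp_continuousOn hvx
    have hd := (hw.mono hK₀I).sub (continuous_snd.comp_continuousOn hvx)
    exact (hvK.inner hd).add ((hvK.norm.div_const _).mul (hd.norm.pow 2))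
  have hφt₀ : benIntegrand ρ (v t₀) (w t₀ - x t₀) < -(ε / 2) := by
    rw [hwt₀ t₀ rfl]
    linarith
  obtain ⟨U, hU, ht₀U, hUφ⟩ := mem_nhdsWithin.1 (hφ t₀ ht₀K₀ (Iio_mem_nhds hφt₀))
  obtain ⟨K, hKU, hK, hKpos⟩ :=
    (hU.measurableSet.inter hK₀.measurableSet).exists_lt_isCompact_of_ne_top
    (measure_ne_top _ _) (ht₀ _ (nhdsWithin_mono _ inter_subset_right
      (inter_mem (mem_nhdsWithin_of_mem_nhds (hU.mem_nhds ht₀U)) self_mem_nhdsWithin)))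
  have hKI : K ⊆ Icc 0 T := fun t ht => hK₀I (hKU ht).2
  refine ⟨K, hKI, hK, hKpos.ne', w, hw.mono hKI, fun t ht => hwC t (hKI ht),
    ⟨R + M, fun t ht => (norm_sub_le _ _).trans (add_le_add (hwR t (hKI ht)) (hM t (hKI ht)))⟩,
    fun t ht => hUφ (hKU ht)⟩

theorem SelectionExtension.ae_neg_mem_proxNormalCone (hC : SelectionExtension C T)
    (hνI : ν (Icc 0 T)ᶜ = 0) (hxb : ∃ M, ∀ t ∈ Icc 0 T, ‖x t‖ ≤ M)
    (hxC : ∀ t ∈ Icc 0 T, x t ∈ C t) (hx : AEStronglyMeasurable x (ν.restrict (Icc 0 T)))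
    (hv : Integrable v ν)
    (h : ∀ y, ContinuousOn y (Icc 0 T) → (∀ᵐ t ∂ν, y t ∈ C t) →
      0 ≤ ∫ t in Icc 0 T, benIntegrand ρ (v t) (y t - x t) ∂ν) :
    ∀ᵐ t ∂ν, -v t ∈ ProxNormalCone (C t) (x t) := by
  by_contra hbad
  obtain ⟨ε, hε, hN⟩ := exists_measure_ne_zero_of_not_ae_neg_mem_proxNormalCone hνI hbad
  obtain ⟨K, hKI, hK, hK0, w, hw, hwC, ⟨η, hη⟩, hwε⟩ :=
    hC.exists_isCompact_benIntegrand_lt hxb hxC hx hv.aestronglyMeasurable.restrict hε hN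
  have hm : 0 < ν.real K := ENNReal.toReal_pos hK0 (measure_ne_top _ _)
  obtain ⟨y, hy, hyC, hyK⟩ := hC.exists_setIntegral_benIntegrand_le (ρ := ρ) hxb hxC hx hv hK
    hKI hw hwC ⟨η, hη⟩ (ε := ε / 4 * ν.real K) (by positivity)
  have hwK : ∫ t in K, benIntegrand ρ (v t) (w t - x t) ∂ν ≤ ∫ _ in K, -(ε / 2) ∂ν :=
    setIntegral_mono_on (integrableOn_benIntegrand hv
      (hx.mono_measure (Measure.restrict_mono hKI le_rfl)) (hw.aestronglyMeasurable
      hK.measurableSet) hK.measurableSet hη) (integrableOn_const (measure_ne_top _ _))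
      hK.measurableSet fun t ht => (hwε t ht).le
  rw [setIntegral_const, smul_eq_mul] at hwK
  have hyI := h y hy ((ae_iff.2 hνI).mono hyC)
  linarith [mul_pos hε hm]

end MovingSet

theorem BEN_principle_general
    {H : Type*} [NormedAddCommGroup H] [InnerProductSpace ℝ H]
    (T : ℝ) (ρ : ℝ≥0∞) (C : ℝ → Set H)
    (hC1 : HypH1 ρ C T) (hC3 : SelectionExtension C T)
    (ν : Measure ℝ) (hν : IsRadonOn ν T)
    (x v : ℝ → H) (hadm : AdmissibleTrajectory C T x) (hdens : HasDensity T ν x v) :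
    ((∀ y : ℝ → H, ContinuousOn y (Icc (0:ℝ) T) → (∀ᵐ t ∂ν, y t ∈ C t) →
          0 ≤ ∫ t in Icc (0:ℝ) T,
            (⟪v t, y t - x t⟫ + ‖v t‖ / (2 * ρ.toReal) * ‖y t - x t‖ ^ 2) ∂ν) ↔
        (∀ᵐ t ∂ν, -v t ∈ ProxNormalCone (C t) (x t))) ∧
      ((∀ᵐ t ∂ν, -v t ∈ ProxNormalCone (C t) (x t)) ↔
        sInf {r : EReal | ∃ y : ℝ → H, ContinuousOn y (Icc (0:ℝ) T) ∧
            (∀ᵐ t ∂ν, y t ∈ C t) ∧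
            r = ((∫ t in Icc (0:ℝ) T,
              (⟪v t, y t - x t⟫ + ‖v t‖ / (2 * ρ.toReal) * ‖y t - x t‖ ^ 2) ∂ν : ℝ) : EReal)}
          = (0 : EReal)) := by
  obtain ⟨_, _, hνI⟩ := hν
  have hxb := hadm.2.1.exists_norm_le
  have hxC := hadm.2.2.2
  have hx := hdens.aestronglyMeasurable
  have hQP : (∀ᵐ t ∂ν, -v t ∈ ProxNormalCone (C t) (x t)) → ∀ y : ℝ → H,
      ContinuousOn y (Icc 0 T) → (∀ᵐ t ∂ν, y t ∈ C t) →
      0 ≤ ∫ t in Icc 0 T, benIntegrand ρ (v t) (y t - x t) ∂ν := fun hQ _ _ hyC =>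
    setIntegral_benIntegrand_nonneg (fun t ht => (hC1 t ht).2.2.2) hνI hxC hQ hyC
  have hPQ := hC3.ae_neg_mem_proxNormalCone hνI hxb hxC hx hdens.1 (ρ := ρ)
  refine ⟨⟨hPQ, hQP⟩, fun hQ => EReal.sInf_eq_zero_of_forall ?_ fun ε hε => ?_,
    fun h0 => hPQ fun y hy hyC => ?_⟩
  · rintro _ ⟨y, hy, hyC, rfl⟩
    exact EReal.coe_nonneg.2 (hQP hQ y hy hyC)
  · obtain ⟨y, hy, hyC, hyε⟩ :=
      hC3.exists_setIntegral_benIntegrand_le_of_pos (ρ := ρ) hxb hxC hx hdens.1 hε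
    exact ⟨_, ⟨y, hy, (ae_iff.2 hνI).mono hyC, rfl⟩, EReal.coe_le_coe hyε⟩
  · exact EReal.coe_nonneg.1 (h0 ▸ sInf_le ⟨y, hy, hyC, rfl⟩)

/-- **Brézis–Ekeland–Nayroles-type principle.** Under (H₁)-(H₃), for an
admissible trajectory `x` with density `v` w.r.t. `ν`, the following are equivalent:
(i) the integral inequality holds against all continuous a.e.-selections of `C`;
(ii) `-v(t) ∈ N^P(C(t); x(t))` for `ν`-a.e. `t`;
(iii) the variational residual `E_ν(x)` (an infimum in `EReal`) equals `0`. -/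
theorem BEN_principle
    {H : Type*} [NormedAddCommGroup H] [InnerProductSpace ℝ H] [CompleteSpace H]
    (T : ℝ) (hT : 0 < T) (ρ : ℝ≥0∞) (hρ : 0 < ρ) (C : ℝ → Set H)
    (hC1 : HypH1 ρ C T) (hC2 : LscOn C (Icc (0:ℝ) T)) (hC3 : SelectionExtension C T)
    (ν : Measure ℝ) (hν : IsRadonOn ν T)
    (x v : ℝ → H) (hadm : AdmissibleTrajectory C T x) (hdens : HasDensity T ν x v) :
    ((∀ y : ℝ → H, ContinuousOn y (Icc (0:ℝ) T) → (∀ᵐ t ∂ν, y t ∈ C t) →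
          0 ≤ ∫ t in Icc (0:ℝ) T,
            (⟪v t, y t - x t⟫ + ‖v t‖ / (2 * ρ.toReal) * ‖y t - x t‖ ^ 2) ∂ν) ↔
        (∀ᵐ t ∂ν, -v t ∈ ProxNormalCone (C t) (x t))) ∧
      ((∀ᵐ t ∂ν, -v t ∈ ProxNormalCone (C t) (x t)) ↔
        sInf {r : EReal | ∃ y : ℝ → H, ContinuousOn y (Icc (0:ℝ) T) ∧
            (∀ᵐ t ∂ν, y t ∈ C t) ∧
            r = ((∫ t in Icc (0:ℝ) T,
              (⟪v t, y t - x t⟫ + ‖v t‖ / (2 * ρ.toReal) * ‖y t - x t‖ ^ 2) ∂ν : ℝ) : EReal)}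
          = (0 : EReal)) :=
  BEN_principle_general T ρ C hC1 hC3 ν hν x v hadm hdens
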